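/- Let G be a non-trivial finite solvable group. Then the Fitting subgroup F(G) has a proper supplement in G: there exists a subgroup U of G with U ≠ G and F(G)·U = G (equivalently, the join F(G) ⊔ U equals G). In particular, the map F(G) ⋊ U → G induced by multiplication (n,u) ↦ nu, where U acts on F(G) by conjugation, is a surjective group homomorphism. -/

import Mathlib

def fittingSubgroup (G : Type*) [Group G] : Subgroup G :=
  ⨆ N : {N : Subgroup G // N.Normal ∧ Group.IsNilpotent N}, (N : Subgroup G)

instance fittingSubgroup_normal (G : Type*) [Group G] : (fittingSubgroup G).Normal := by
  constructor
  intro n hn g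
  refine Subgroup.iSup_induction (G := G)
    (fun N : {N : Subgroup G // N.Normal ∧ Group.IsNilpotent N} => (N : Subgroup G))
    (C := fun x => g * x * g⁻¹ ∈ fittingSubgroup G) hn (fun N x hx => ?_) ?_ (fun x y hx hy => ?_)
  · exact Subgroup.mem_iSup_of_mem N (N.2.1.conj_mem x hx g)
  · simpa using (fittingSubgroup G).one_mem
  · show g * (x * y) * g⁻¹ ∈ fittingSubgroup G
    have h : g * (x * y) * g⁻¹ = (g * x * g⁻¹) * (g * y * g⁻¹) := by group
    rw [h]; exact (fittingSubgroup G).mul_mem hx hy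

/-
It suffices to show `F(G) ≰ Φ(G)`: a maximal subgroup not containing `F(G)` is then a proper
supplement. As `G` is solvable and `Φ(G) ≠ G`, there is a normal subgroup `H > Φ(G)` with
`H / Φ(G)` abelian, and such an `H` is nilpotent. Indeed, for a Sylow subgroup `P` of `H` the
group `PΦ(G)` contains `[H, H]`, so it is normalized by `H` and by `N_G(P)`, which together
generate `G` (Frattini argument); the Frattini argument for `PΦ(G) ⊴ G` then gives
`G = N_G(P) Φ(G) = N_G(P)`. Hence `H ≤ F(G)`, which rules out `F(G) ≤ Φ(G) < H`.
-/

open Subgroup Pointwise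

section

variable {G : Type*} [Group G]

theorem le_fittingSubgroup (N : Subgroup G) [hN : N.Normal] [hn : Group.IsNilpotent N] :
    N ≤ fittingSubgroup G :=
  le_iSup (fun N : {N : Subgroup G // N.Normal ∧ Group.IsNilpotent N} => (N : Subgroup G))
    ⟨N, hN, hn⟩

theorem frattini_ne_top [IsCoatomic (Subgroup G)] [Nontrivial G] : frattini G ≠ ⊤ := by
  obtain ⟨M, hM, -⟩ := (eq_top_or_exists_le_coatom (⊥ : Subgroup G)).resolve_left bot_ne_top
  exact ne_top_of_le_ne_top hM.ne_top (frattini_le_coatom hM)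

theorem exists_isCoatom_sup_eq_top_of_not_le_frattini {K : Subgroup G}
    (hK : ¬K ≤ frattini G) : ∃ M : Subgroup G, IsCoatom M ∧ K ⊔ M = ⊤ := by
  obtain ⟨M, hM, hKM⟩ : ∃ M, IsCoatom M ∧ ¬K ≤ M := by
    by_contra! h
    exact hK (le_iInf₂ h)
  exact ⟨M, hM, codisjoint_iff.mp (hM.not_le_iff_codisjoint.mp hKM).symm⟩

theorem Group.IsSolvable.exists_derivedSeries_ne_bot_succ_eq_bot [Group.IsSolvable G]
    [Nontrivial G] : ∃ n, derivedSeries G n ≠ ⊥ ∧ derivedSeries G (n + 1) = ⊥ := by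
  classical
  have hsolv : ∃ n, derivedSeries G n = ⊥ := Group.IsSolvable.solvable
  obtain ⟨m, hm⟩ : ∃ m, Nat.find hsolv = m + 1 := by
    refine Nat.exists_eq_succ_of_ne_zero fun h0 => top_ne_bot (α := Subgroup G) ?_
    rw [← derivedSeries_zero, ← h0]
    exact Nat.find_spec hsolv
  exact ⟨m, Nat.find_min hsolv (by omega), hm ▸ Nat.find_spec hsolv⟩

theorem Subgroup.exists_normal_lt_commutator_le [Group.IsSolvable G] (N : Subgroup G) [N.Normal]
    (hN : N ≠ ⊤) : ∃ H : Subgroup G, H.Normal ∧ N < H ∧ ⁅H, H⁆ ≤ N := by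
  have : Nontrivial (G ⧸ N) := QuotientGroup.nontrivial_iff.mpr hN
  obtain ⟨n, hne, hbot⟩ :=
    Group.IsSolvable.exists_derivedSeries_ne_bot_succ_eq_bot (G := G ⧸ N)
  set A := derivedSeries (G ⧸ N) n
  have hmap : (A.comap (QuotientGroup.mk' N)).map (QuotientGroup.mk' N) = A :=
    map_comap_eq_self_of_surjective (QuotientGroup.mk'_surjective N) A
  have hle : N ≤ A.comap (QuotientGroup.mk' N) := by
    simpa only [QuotientGroup.ker_mk'] using ker_le_comap (QuotientGroup.mk' N) A
  refine ⟨A.comap (QuotientGroup.mk' N), (derivedSeries_normal _ n).comap _,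
    hle.lt_of_ne fun h => hne ?_, ?_⟩
  · rw [← hmap, ← h, map_eq_bot_iff, QuotientGroup.ker_mk']
  · refine ((map_eq_bot_iff _).mp ?_).trans (QuotientGroup.ker_mk' N).le
    rw [map_commutator, hmap, ← derivedSeries_succ, hbot]

section Finite

variable [Finite G]

theorem Sylow.normal_map_subtype_of_le_sup_frattini {K : Subgroup G} [K.Normal] {p : ℕ}
    [Fact p.Prime] (P : Sylow p K) (hK : K ≤ P.map K.subtype ⊔ frattini G) :
    (P.map K.subtype).Normal := by
  rw [← normalizer_eq_top_iff]
  refine frattini_nongenerating (top_le_iff.mp ?_)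
  rw [← Sylow.normalizer_sup_eq_top P]
  exact sup_le le_sup_left (hK.trans (sup_le_sup_right le_normalizer _))

theorem Sylow.normal_map_subtype_of_commutator_le_frattini {H : Subgroup G} [H.Normal]
    (hΦH : frattini G ≤ H) (hH : ⁅H, H⁆ ≤ frattini G) {p : ℕ} [Fact p.Prime] (P : Sylow p H) :
    (P.map H.subtype).Normal := by
  set K := P.map H.subtype ⊔ frattini G
  have hKH : K ≤ H := sup_le (map_subtype_le _) hΦH
  have : K.Normal := by
    rw [← normalizer_eq_top_iff, eq_top_iff, ← Sylow.normalizer_sup_eq_top P]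
    refine sup_le normalizer_le_normalizer_sup_normal ?_
    rw [le_normalizer_iff_commutator_le_right]
    exact (commutator_mono le_rfl hKH).trans (hH.trans le_sup_right)
  have hPK : (P : Subgroup H) ≤ (inclusion hKH).range := by
    rw [inclusion_range]
    exact map_le_iff_le_comap.mp le_sup_left
  let Q : Sylow p K := P.comapOfInjective (inclusion hKH) (inclusion_injective hKH) hPK
  have hQ : Q.map K.subtype = P.map H.subtype := by
    show map K.subtype (P.comap (inclusion hKH)) = _
    rw [← subtype_comp_inclusion hKH, ← map_map, map_comap_eq, inf_of_le_right hPK]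
  rw [← hQ]
  exact Q.normal_map_subtype_of_le_sup_frattini (hQ ▸ le_rfl)

theorem isNilpotent_of_commutator_le_frattini {H : Subgroup G} [H.Normal]
    (hΦH : frattini G ≤ H) (hH : ⁅H, H⁆ ≤ frattini G) : Group.IsNilpotent H := by
  refine ((Group.isNilpotent_of_finite_tfae (G := H)).out 0 3).mpr ?_
  intro p _ P
  exact (P.normal_map_subtype_of_commutator_le_frattini hΦH hH).of_map_subtype

theorem fittingSubgroup_not_le_frattini [Nontrivial G] [Group.IsSolvable G] :
    ¬fittingSubgroup G ≤ frattini G := by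
  intro hF
  obtain ⟨H, hH, hΦH, hcomm⟩ := (frattini G).exists_normal_lt_commutator_le frattini_ne_top
  have := isNilpotent_of_commutator_le_frattini hΦH.le hcomm
  exact hΦH.not_ge ((le_fittingSubgroup H).trans hF)

end Finite

def Subgroup.semidirectProductMul (N U : Subgroup G) [N.Normal] :
    N ⋊[MulAut.conjNormal.comp U.subtype] U →* G :=
  SemidirectProduct.lift N.subtype U.subtype fun u => by
    ext n
    simp

theorem Subgroup.semidirectProductMul_surjective {N U : Subgroup G} [N.Normal]
    (h : N ⊔ U = ⊤) : Function.Surjective (N.semidirectProductMul U) := by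
  intro g
  obtain ⟨n, hn, u, hu, rfl⟩ : g ∈ (N : Set G) * (U : Set G) := by
    rw [← normal_mul, h]
    exact mem_top g
  exact ⟨⟨⟨n, hn⟩, ⟨u, hu⟩⟩, rfl⟩

end

/-- In a non-trivial finite solvable group the Fitting subgroup `F(G)` has a proper
supplement `U`; in particular the multiplication map `F(G) ⋊ U → G` (with `U` acting
on `F(G)` by conjugation) is a surjective homomorphism. -/
theorem fitting_has_proper_supplement_of_finite_solvable
    (G : Type*) [Group G] [Finite G] [Nontrivial G] [Group.IsSolvable G] :
    ∃ U : Subgroup G, U ≠ ⊤ ∧ fittingSubgroup G ⊔ U = ⊤ ∧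
      ∃ φ : (fittingSubgroup G) ⋊[MulAut.conjNormal.comp U.subtype] U →* G,
        (∀ (n : fittingSubgroup G) (u : U), φ ⟨n, u⟩ = (n : G) * (u : G)) ∧
          Function.Surjective φ := by
  obtain ⟨M, hM, hsup⟩ :=
    exists_isCoatom_sup_eq_top_of_not_le_frattini (fittingSubgroup_not_le_frattini (G := G))
  exact ⟨M, hM.ne_top, hsup, _, fun _ _ => rfl, semidirectProductMul_surjective hsup⟩
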